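/- Let k be a field of characteristic zero, let Ω be a k-vector space of dimension 2, let ⋆ ∈ Ω, and let Λ be a subspace of (Ω⊗Ω) ⊕ (Ω⊗Ω). There exists a unit action (α, β) for ⋆ with α = β that is coherent with Λ if and only if there exists a basis (∘₁, ∘₂) of Ω with ⋆ = ∘₁ + ∘₂ such that Λ is contained in the span of (∘₁⊗⋆, ∘₁⊗⋆) + (∘₂⊗∘₁, ∘₂⊗∘₁), (∘₂⊗∘₂, 0), and (0, ∘₂⊗∘₂) in (Ω⊗Ω) ⊕ (Ω⊗Ω). -/

import Mathlib

open TensorProduct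

section Defs

variable {k : Type*} [Field k]

noncomputable def contrL {Ω : Type*} [AddCommGroup Ω] [Module k Ω]
    (φ : Module.Dual k Ω) : Ω ⊗[k] Ω →ₗ[k] Ω :=
  (TensorProduct.lid k Ω).toLinearMap ∘ₗ TensorProduct.map φ LinearMap.id

noncomputable def contrR {Ω : Type*} [AddCommGroup Ω] [Module k Ω]
    (φ : Module.Dual k Ω) : Ω ⊗[k] Ω →ₗ[k] Ω :=
  (TensorProduct.rid k Ω).toLinearMap ∘ₗ TensorProduct.map LinearMap.id φ

noncomputable def contrB {Ω₁ Ω₂ : Type*} [AddCommGroup Ω₁] [Module k Ω₁]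
    [AddCommGroup Ω₂] [Module k Ω₂]
    (φ : Module.Dual k Ω₁) (ψ : Module.Dual k Ω₂) : Ω₁ ⊗[k] Ω₂ →ₗ[k] k :=
  (TensorProduct.lid k k).toLinearMap ∘ₗ TensorProduct.map φ ψ

/-- The coherence equations (C1)-(C5) for a pair `uv ∈ (Ω⊗Ω) × (Ω⊗Ω)`. -/
def CoherenceEqs {Ω : Type*} [AddCommGroup Ω] [Module k Ω]
    (α β : Module.Dual k Ω) (star : Ω)
    (uv : (Ω ⊗[k] Ω) × (Ω ⊗[k] Ω)) : Prop :=
  contrL β uv.1 = contrL β uv.2 ∧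
  contrL α uv.1 = contrR β uv.2 ∧
  contrR α uv.1 = contrR α uv.2 ∧
  contrR β uv.1 = contrB β β uv.2 • star ∧
  contrB α α uv.1 • star = contrL α uv.2

/-- The compatibility equations (C1)-(C3). -/
def CompatEqs {Ω : Type*} [AddCommGroup Ω] [Module k Ω]
    (α β : Module.Dual k Ω)
    (uv : (Ω ⊗[k] Ω) × (Ω ⊗[k] Ω)) : Prop :=
  contrL β uv.1 = contrL β uv.2 ∧
  contrL α uv.1 = contrR β uv.2 ∧
  contrR α uv.1 = contrR α uv.2

def IsCoherent {Ω : Type*} [AddCommGroup Ω] [Module k Ω]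
    (α β : Module.Dual k Ω) (star : Ω)
    (Λ : Submodule k ((Ω ⊗[k] Ω) × (Ω ⊗[k] Ω))) : Prop :=
  ∀ uv ∈ Λ, CoherenceEqs α β star uv

def IsCompatible {Ω : Type*} [AddCommGroup Ω] [Module k Ω]
    (α β : Module.Dual k Ω)
    (Λ : Submodule k ((Ω ⊗[k] Ω) × (Ω ⊗[k] Ω))) : Prop :=
  ∀ uv ∈ Λ, CompatEqs α β uv

end Defs

section Helpers

variable {k : Type*} [Field k] {Ω : Type*} [AddCommGroup Ω] [Module k Ω]

@[simp] lemma contrL_tmul (φ : Module.Dual k Ω) (x y : Ω) :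
    contrL φ (x ⊗ₜ[k] y) = φ x • y := by simp [contrL]

@[simp] lemma contrR_tmul (φ : Module.Dual k Ω) (x y : Ω) :
    contrR φ (x ⊗ₜ[k] y) = φ y • x := by simp [contrR]

@[simp] lemma contrB_tmul (φ ψ : Module.Dual k Ω) (x y : Ω) :
    contrB φ ψ (x ⊗ₜ[k] y) = φ x * ψ y := by simp [contrB]

lemma comp_contrL (φ ψ : Module.Dual k Ω) :
    ψ ∘ₗ contrL (k := k) φ = contrB φ ψ := by
  apply TensorProduct.ext'
  intro x y; simp [mul_comm]

lemma comp_contrR (φ ψ : Module.Dual k Ω) :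
    ψ ∘ₗ contrR (k := k) φ = contrB ψ φ := by
  apply TensorProduct.ext'
  intro x y; simp [mul_comm]

lemma apply_contrL (φ ψ : Module.Dual k Ω) (u : Ω ⊗[k] Ω) :
    ψ (contrL φ u) = contrB φ ψ u := LinearMap.congr_fun (comp_contrL φ ψ) u

lemma apply_contrR (φ ψ : Module.Dual k Ω) (u : Ω ⊗[k] Ω) :
    ψ (contrR φ u) = contrB ψ φ u := LinearMap.congr_fun (comp_contrR φ ψ) u

lemma tensor_expand (b : Module.Basis (Fin 2) k Ω) (u : Ω ⊗[k] Ω) :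
    u = contrB (b.coord 0) (b.coord 0) u • (b 0 ⊗ₜ[k] b 0)
      + contrB (b.coord 0) (b.coord 1) u • (b 0 ⊗ₜ[k] b 1)
      + contrB (b.coord 1) (b.coord 0) u • (b 1 ⊗ₜ[k] b 0)
      + contrB (b.coord 1) (b.coord 1) u • (b 1 ⊗ₜ[k] b 1) := by
  have h : (LinearMap.id : Ω ⊗[k] Ω →ₗ[k] Ω ⊗[k] Ω) =
      (contrB (b.coord 0) (b.coord 0)).smulRight (b 0 ⊗ₜ[k] b 0)
      + (contrB (b.coord 0) (b.coord 1)).smulRight (b 0 ⊗ₜ[k] b 1)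
      + (contrB (b.coord 1) (b.coord 0)).smulRight (b 1 ⊗ₜ[k] b 0)
      + (contrB (b.coord 1) (b.coord 1)).smulRight (b 1 ⊗ₜ[k] b 1) := by
    apply (b.tensorProduct b).ext
    rintro ⟨i, j⟩
    fin_cases i <;> fin_cases j <;>
      simp [Module.Basis.tensorProduct_apply', Module.Basis.coord_apply, Module.Basis.repr_self,
        Finsupp.single_apply]
  conv_lhs => rw [← LinearMap.id_apply (R := k) u, h]
  simp [LinearMap.smulRight]

noncomputable def cohSub (α β : Module.Dual k Ω) (star : Ω) :
    Submodule k ((Ω ⊗[k] Ω) × (Ω ⊗[k] Ω)) :=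
  LinearMap.ker (contrL β ∘ₗ .fst k _ _ - contrL β ∘ₗ .snd k _ _) ⊓
  LinearMap.ker (contrL α ∘ₗ .fst k _ _ - contrR β ∘ₗ .snd k _ _) ⊓
  LinearMap.ker (contrR α ∘ₗ .fst k _ _ - contrR α ∘ₗ .snd k _ _) ⊓
  LinearMap.ker (contrR β ∘ₗ .fst k _ _ - (contrB β β ∘ₗ .snd k _ _).smulRight star) ⊓
  LinearMap.ker ((contrB α α ∘ₗ .fst k _ _).smulRight star - contrL α ∘ₗ .snd k _ _)

lemma mem_cohSub {α β : Module.Dual k Ω} {star : Ω}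
    {uv : (Ω ⊗[k] Ω) × (Ω ⊗[k] Ω)} :
    uv ∈ cohSub α β star ↔ CoherenceEqs α β star uv := by
  simp [cohSub, CoherenceEqs, Submodule.mem_inf, LinearMap.mem_ker, sub_eq_zero,
    and_assoc]

lemma isCoherent_iff {α β : Module.Dual k Ω} {star : Ω}
    {Λ : Submodule k ((Ω ⊗[k] Ω) × (Ω ⊗[k] Ω))} :
    IsCoherent α β star Λ ↔ Λ ≤ cohSub α β star := by
  constructor
  · intro h uv huv; exact mem_cohSub.mpr (h uv huv)
  · intro h uv huv; exact mem_cohSub.mp (h huv)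

end Helpers

/-- Corollary: dimension-2 case, coherent unit actions with α = β. -/
theorem dim_two_eq_coherent_classification
    {k : Type*} [Field k] [CharZero k]
    {Ω : Type*} [AddCommGroup Ω] [Module k Ω] [FiniteDimensional k Ω]
    (hdim : Module.finrank k Ω = 2)
    (star : Ω) (Λ : Submodule k ((Ω ⊗[k] Ω) × (Ω ⊗[k] Ω))) :
    (∃ α β : Module.Dual k Ω,
        α star = 1 ∧ β star = 1 ∧ α = β ∧ IsCoherent α β star Λ) ↔
    (∃ b : Module.Basis (Fin 2) k Ω, star = b 0 + b 1 ∧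
      Λ ≤ Submodule.span k
        ({(b 0 ⊗ₜ[k] star, b 0 ⊗ₜ[k] star) + (b 1 ⊗ₜ[k] b 0, b 1 ⊗ₜ[k] b 0),
          (b 1 ⊗ₜ[k] b 1, 0),
          (0, b 1 ⊗ₜ[k] b 1)} :
          Set ((Ω ⊗[k] Ω) × (Ω ⊗[k] Ω)))) := by
  constructor
  · rintro ⟨α, β, hα, hβ, rfl, hcoh⟩
    -- find a nonzero kernel vector of α
    have hker : LinearMap.ker α ≠ ⊥ := by
      intro h
      have hinj : Function.Injective α := LinearMap.ker_eq_bot.mp h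
      have hle := LinearMap.finrank_le_finrank_of_injective hinj
      rw [hdim, Module.finrank_self] at hle
      omega
    obtain ⟨e₂, he₂mem, he₂ne⟩ := Submodule.exists_mem_ne_zero_of_ne_bot hker
    have hαe₂ : α e₂ = 0 := LinearMap.mem_ker.mp he₂mem
    have hli : LinearIndependent k ![star - e₂, e₂] := by
      rw [linearIndependent_fin2]
      refine ⟨by simpa using he₂ne, ?_⟩
      intro a h
      have h' := congrArg α h
      simp [map_smul, map_sub, hα, hαe₂] at h'
    let b : Module.Basis (Fin 2) k Ω :=
      basisOfLinearIndependentOfCardEqFinrank hli (by simp [hdim])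
    have hb0 : b 0 = star - e₂ := by
      simp [b, coe_basisOfLinearIndependentOfCardEqFinrank]
    have hb1 : b 1 = e₂ := by
      simp [b, coe_basisOfLinearIndependentOfCardEqFinrank]
    have hstar : star = b 0 + b 1 := by rw [hb0, hb1]; abel
    have hα0 : α = b.coord 0 := by
      apply b.ext
      intro i
      fin_cases i <;> rw [Module.Basis.coord_apply, Module.Basis.repr_self] <;>
        simp [hb0, hb1, map_sub, hα, hαe₂, Finsupp.single_apply]
    rw [hα0] at hcoh
    refine ⟨b, hstar, ?_⟩
    intro uv huv
    obtain ⟨h1, h2, h3, h4, h5⟩ := hcoh uv huv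
    set t := contrB (b.coord 0) (b.coord 0) uv.1 with ht
    have hcoord1star : b.coord 1 star = 1 := by
      rw [hstar]
      simp [Module.Basis.coord_apply, Module.Basis.repr_self, Finsupp.single_apply]
    -- scalar consequences
    have f1 : contrB (b.coord 0) (b.coord 0) uv.2 = t := by
      have := congrArg (b.coord 0) h1
      rw [apply_contrL, apply_contrL] at this
      exact this.symm
    have f2 : contrB (b.coord 1) (b.coord 0) uv.1 = t := by
      have := congrArg (b.coord 1) h4
      rw [apply_contrR, map_smul, smul_eq_mul, hcoord1star, mul_one, f1] at this
      exact this
    have f3 : contrB (b.coord 1) (b.coord 0) uv.2 = t := by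
      have := congrArg (b.coord 1) h3
      rw [apply_contrR, apply_contrR] at this
      rw [← this, f2]
    have f4 : contrB (b.coord 0) (b.coord 1) uv.1 = t := by
      have := congrArg (b.coord 1) h2
      rw [apply_contrL, apply_contrR] at this
      rw [this, f3]
    have f5 : contrB (b.coord 0) (b.coord 1) uv.2 = t := by
      have := congrArg (b.coord 1) h5
      rw [apply_contrL, map_smul, smul_eq_mul, hcoord1star, mul_one] at this
      exact this.symm
    have key : uv =
        t • ((b 0 ⊗ₜ[k] star, b 0 ⊗ₜ[k] star) + (b 1 ⊗ₜ[k] b 0, b 1 ⊗ₜ[k] b 0))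
        + (contrB (b.coord 1) (b.coord 1) uv.1) • ((b 1 ⊗ₜ[k] b 1, 0)
            : (Ω ⊗[k] Ω) × (Ω ⊗[k] Ω))
        + (contrB (b.coord 1) (b.coord 1) uv.2) • ((0, b 1 ⊗ₜ[k] b 1)
            : (Ω ⊗[k] Ω) × (Ω ⊗[k] Ω)) := by
      have hu := tensor_expand b uv.1
      have hv := tensor_expand b uv.2
      rw [← ht, f2, f4] at hu
      rw [f1, f3, f5] at hv
      apply Prod.ext
      · simpa [hstar, tmul_add, smul_add, add_assoc] using hu
      · simpa [hstar, tmul_add, smul_add, add_assoc] using hv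
    rw [key]
    refine Submodule.add_mem _ (Submodule.add_mem _ ?_ ?_) ?_
    · exact Submodule.smul_mem _ _ (Submodule.subset_span (Set.mem_insert _ _))
    · exact Submodule.smul_mem _ _ (Submodule.subset_span
        (Set.mem_insert_of_mem _ (Set.mem_insert _ _)))
    · exact Submodule.smul_mem _ _ (Submodule.subset_span
        (Set.mem_insert_of_mem _ (Set.mem_insert_of_mem _ rfl)))
  · rintro ⟨b, hstar, hspan⟩
    have hc0 : ∀ i : Fin 2, b.coord 0 (b i) = if i = 0 then 1 else 0 := by
      intro i
      fin_cases i <;>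
        simp [Module.Basis.coord_apply, Module.Basis.repr_self, Finsupp.single_apply]
    have hcs : b.coord 0 star = 1 := by
      rw [hstar]; simp [hc0]
    refine ⟨b.coord 0, b.coord 0, hcs, hcs, rfl, ?_⟩
    rw [isCoherent_iff]
    refine le_trans hspan (Submodule.span_le.mpr ?_)
    rintro x hx
    simp only [Set.mem_insert_iff, Set.mem_singleton_iff] at hx
    rw [SetLike.mem_coe, mem_cohSub]
    rcases hx with rfl | rfl | rfl <;> refine ⟨?_, ?_, ?_, ?_, ?_⟩ <;>
      simp [hstar, tmul_add, smul_add, hc0, Prod.fst_add, Prod.snd_add, mul_add,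
        add_comm]
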